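/- arXiv:0708.3180 — 3 statements merged into one kernel-verified Lean document; each statement's English description precedes it below -/
import Mathlib

section
/- The Casimir operator is equivariant: for every x ∈ L and every v ∈ V one has C(x · v) = x · C(v); that is, the Casimir operator is a morphism of Lie modules from V to itself. -/
/-!
The family `f` is a basis, since `B` maps it onto the dual basis of `e`. Expanding `⁅x, eᵢ⁆` in
`e` and `⁅x, fᵢ⁆` in `f`, invariance of `B` makes the coefficients of the second expansion the
negatives of those of the first, so `x` annihilates the Casimir tensor `∑ eᵢ ⊗ fᵢ`. The Casimir
operator is the image of this tensor under `a ⊗ b ↦ (v ↦ a · (b · v))`, and the Leibniz rule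
turns the invariance of the tensor into the equivariance of the operator.
-/

open Module TensorProduct TensorProduct.LieModule Finset

section DualFamily

variable {R M N ι : Type*} [CommSemiring R] [AddCommMonoid M] [Module R M]
  [AddCommMonoid N] [Module R N] [DecidableEq ι]

theorem Module.Basis.coord_eq_flip_of_apply_eq_ite (B : M →ₗ[R] N →ₗ[R] R) (e : Basis ι R M)
    {f : ι → N} (hf : ∀ i j, B (e i) (f j) = if i = j then 1 else 0) (j : ι) :
    e.coord j = B.flip (f j) :=
  e.ext fun i => by simp [hf, Finsupp.single_apply]

theorem Module.Basis.sum_apply_smul_eq_of_apply_eq_ite [Fintype ι] (B : M →ₗ[R] N →ₗ[R] R)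
    (e : Basis ι R M) {f : ι → N} (hf : ∀ i j, B (e i) (f j) = if i = j then 1 else 0) (y : M) :
    ∑ j, B y (f j) • e j = y := by
  simp_rw [← LinearMap.flip_apply B, ← e.coord_eq_flip_of_apply_eq_ite B hf, Basis.coord_apply]
  exact e.sum_repr y

end DualFamily

section DualFamilyField

variable {K M N ι : Type*} [Field K] [AddCommGroup M] [Module K M] [AddCommGroup N] [Module K N]
  [Fintype ι] [DecidableEq ι]

theorem linearIndependent_of_apply_eq_ite (B : M →ₗ[K] N →ₗ[K] K) (e : Basis ι K M)
    {f : ι → N} (hf : ∀ i j, B (e i) (f j) = if i = j then 1 else 0) :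
    LinearIndependent K f := by
  refine LinearIndependent.of_comp B.flip ?_
  have hcomp : B.flip ∘ f = e.dualBasis := funext fun j => by
    rw [Basis.coe_dualBasis, Function.comp_apply, e.coord_eq_flip_of_apply_eq_ite B hf]
  exact hcomp ▸ e.dualBasis.linearIndependent

theorem LinearMap.BilinForm.sum_apply_smul_eq_of_apply_eq_ite (B : LinearMap.BilinForm K M)
    (e : Basis ι K M) {f : ι → M} (hf : ∀ i j, B (e i) (f j) = if i = j then 1 else 0) (y : M) :
    ∑ j, B (e j) y • f j = y := by
  have : FiniteDimensional K M := .of_basis e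
  have hspan := (linearIndependent_of_apply_eq_ite B e hf).span_eq_top_of_card_eq_finrank'
    (finrank_eq_card_basis e).symm
  obtain ⟨c, rfl⟩ :=
    (Submodule.mem_span_range_iff_exists_fun K).mp (hspan ▸ Submodule.mem_top : y ∈ _)
  simp [hf]

end DualFamilyField

theorem lie_sum_tmul_eq_zero_of_apply_eq_ite {K L ι : Type*} [Field K] [LieRing L]
    [LieAlgebra K L] [Fintype ι] [DecidableEq ι] (B : LinearMap.BilinForm K L)
    (hBinv : ∀ x y z : L, B ⁅x, y⁆ z = B x ⁅y, z⁆) (e : Basis ι K L) {f : ι → L}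
    (hf : ∀ i j, B (e i) (f j) = if i = j then 1 else 0) (x : L) :
    ⁅x, ∑ i, e i ⊗ₜ[K] f i⁆ = 0 := by
  have hcoef : ∀ i j, B (e j) ⁅x, f i⁆ = -B ⁅x, e j⁆ (f i) := fun i j => by
    rw [← hBinv, ← lie_skew, map_neg, LinearMap.neg_apply]
  have hleft : ∑ i, ⁅x, e i⁆ ⊗ₜ[K] f i = ∑ i, ∑ j, B ⁅x, e i⁆ (f j) • e j ⊗ₜ[K] f i := by
    refine sum_congr rfl fun i _ => ?_
    conv_lhs => rw [← e.sum_apply_smul_eq_of_apply_eq_ite B hf ⁅x, e i⁆]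
    simp [sum_tmul, smul_tmul']
  have hright : ∑ i, e i ⊗ₜ[K] ⁅x, f i⁆ = -∑ i, ∑ j, B ⁅x, e i⁆ (f j) • e j ⊗ₜ[K] f i := by
    rw [sum_comm, ← sum_neg_distrib]
    refine sum_congr rfl fun i _ => ?_
    conv_lhs => rw [← B.sum_apply_smul_eq_of_apply_eq_ite e hf ⁅x, f i⁆]
    simp only [hcoef, neg_smul, sum_neg_distrib, tmul_neg, tmul_sum, tmul_smul]
  simp_rw [lie_sum, lie_tmul_right]
  rw [sum_add_distrib, hleft, hright, add_neg_cancel]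

theorem casimir_equivariant_general
    {K : Type*} [Field K] {L : Type*} [LieRing L] [LieAlgebra K L]
    {V : Type*} [AddCommGroup V] [Module K V] [LieRingModule L V] [LieModule K L V]
    (B : LinearMap.BilinForm K L)
    (hBinv : ∀ x y z : L, B ⁅x, y⁆ z = B x ⁅y, z⁆)
    {n : ℕ} (e : Module.Basis (Fin n) K L) (f : Fin n → L)
    (hf : ∀ i j, B (e i) (f j) = if i = j then 1 else 0)
    (x : L) (v : V) :
    ∑ i, ⁅e i, ⁅f i, ⁅x, v⁆⁆⁆ = ⁅x, ∑ i, ⁅e i, ⁅f i, v⁆⁆⁆ := by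
  let act : L ⊗[K] L →ₗ[K] V := TensorProduct.lift <| LinearMap.mk₂ K (fun a b => ⁅a, ⁅b, v⁆⁆)
    (fun _ _ _ => add_lie ..) (fun _ _ _ => smul_lie ..) (fun _ _ _ => by rw [add_lie, lie_add])
    (fun _ _ _ => by rw [smul_lie, lie_smul])
  have hinv := congrArg act (lie_sum_tmul_eq_zero_of_apply_eq_ite B hBinv e hf x)
  simp only [lie_sum, lie_tmul_right, map_sum, map_add, lift.tmul, LinearMap.mk₂_apply, map_zero,
    sum_add_distrib, act] at hinv
  simp only [lie_sum, leibniz_lie x (e _), leibniz_lie x (f _) v, lie_add, sum_add_distrib]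
  rw [← add_assoc, hinv, zero_add]

/-- The Casimir operator is equivariant: `C(x · v) = x · C(v)` for all `x ∈ L`, `v ∈ V`;
that is, the Casimir operator is a morphism of Lie modules from `V` to itself. -/
theorem casimir_equivariant
    {K : Type*} [Field K] {L : Type*} [LieRing L] [LieAlgebra K L]
    [Module.Finite K L]
    {V : Type*} [AddCommGroup V] [Module K V] [LieRingModule L V] [LieModule K L V]
    (B : LinearMap.BilinForm K L)
    (hBsymm : ∀ x y : L, B x y = B y x)
    (hBinv : ∀ x y z : L, B ⁅x, y⁆ z = B x ⁅y, z⁆)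
    (hBnd : B.Nondegenerate)
    {n : ℕ} (e : Module.Basis (Fin n) K L) (f : Fin n → L)
    (hf : ∀ i j, B (e i) (f j) = if i = j then 1 else 0)
    (x : L) (v : V) :
    ∑ i, ⁅e i, ⁅f i, ⁅x, v⁆⁆⁆ = ⁅x, ∑ i, ⁅e i, ⁅f i, v⁆⁆⁆ :=
  casimir_equivariant_general B hBinv e f hf x v
end

section
/- If K is algebraically closed and V is a nonzero finite-dimensional irreducible Lie module over L, then the Casimir operator acts on V by a scalar: there exists c ∈ K such that C(v) = c • v for all v ∈ V. -/
/-!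
Expanding `⁅x, eᵢ⁆` in the basis `e` and `⁅x, fᵢ⁆` in the basis `f`, invariance of `B` shows that
the canonical element `∑ eᵢ ⊗ fᵢ` of `L ⊗ L` is annihilated by `ad x`; hence the Casimir operator
commutes with the action of `L`. Over an algebraically closed field it has an eigenvalue `c`, and
`C - c` is then a Lie module endomorphism with nonzero kernel, so by irreducibility `C = c`.
-/

namespace LinearMap.BilinForm

variable {K L ι : Type*} [Field K] [Fintype ι] [DecidableEq ι]

section Module

variable [AddCommGroup L] [Module K L] {B : LinearMap.BilinForm K L} {e : Module.Basis ι K L}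
  {f : ι → L}

theorem sum_apply_dual_smul_basis (hf : ∀ i j, B (e i) (f j) = if i = j then 1 else 0) (y : L) :
    ∑ j, B y (f j) • e j = y := by
  have hcoord : ∀ j, B.flip (f j) = e.coord j :=
    fun j => e.ext fun i => by simp [hf, Finsupp.single_apply]
  calc ∑ j, B y (f j) • e j = ∑ j, e.coord j y • e j := by
        simp only [← hcoord]; rfl
    _ = y := e.sum_repr y

theorem sum_basis_apply_smul_dual (hB : B.SeparatingRight)
    (hf : ∀ i j, B (e i) (f j) = if i = j then 1 else 0) (y : L) :
    ∑ j, B (e j) y • f j = y := by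
  refine (sub_eq_zero.mp (hB _ fun x => ?_)).symm
  have : B.flip (y - ∑ j, B (e j) y • f j) = 0 := e.ext fun i => by simp [map_sum, hf]
  exact LinearMap.congr_fun this x

end Module

variable [LieRing L] [LieAlgebra K L] {B : LinearMap.BilinForm K L} {e : Module.Basis ι K L}
  {f : ι → L}

/-- The invariance of `∑ eᵢ ⊗ fᵢ ∈ L ⊗ L`, tested against an arbitrary bilinear map `Φ`. -/
theorem sum_lie_apply_add_apply_lie_eq_zero {M : Type*} [AddCommGroup M] [Module K M]
    (hBinv : B.lieInvariant L) (hB : B.SeparatingRight)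
    (hf : ∀ i j, B (e i) (f j) = if i = j then 1 else 0) (Φ : L →ₗ[K] L →ₗ[K] M) (x : L) :
    ∑ i, (Φ ⁅x, e i⁆ (f i) + Φ (e i) ⁅x, f i⁆) = 0 := by
  have h₁ : ∑ i, Φ ⁅x, e i⁆ (f i) = ∑ i, ∑ j, B ⁅x, e i⁆ (f j) • Φ (e j) (f i) := by
    refine Finset.sum_congr rfl fun i _ => ?_
    conv_lhs => rw [← sum_apply_dual_smul_basis hf ⁅x, e i⁆]
    simp only [map_sum, map_smul, LinearMap.sum_apply, LinearMap.smul_apply]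
  have h₂ : ∑ i, Φ (e i) ⁅x, f i⁆ = ∑ i, ∑ j, B (e i) ⁅x, f j⁆ • Φ (e j) (f i) := by
    rw [Finset.sum_comm]
    refine Finset.sum_congr rfl fun i _ => ?_
    conv_lhs => rw [← sum_basis_apply_smul_dual hB hf ⁅x, f i⁆]
    simp only [map_sum, map_smul]
  rw [Finset.sum_add_distrib, h₁, h₂, ← Finset.sum_add_distrib]
  refine Finset.sum_eq_zero fun i _ => ?_
  rw [← Finset.sum_add_distrib]
  refine Finset.sum_eq_zero fun j _ => ?_
  rw [hBinv, neg_smul, neg_add_cancel]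

end LinearMap.BilinForm

namespace LieModule

variable {K L V : Type*} [Field K] [LieRing L] [LieAlgebra K L]
  [AddCommGroup V] [Module K V] [LieRingModule L V] [LieModule K L V]

theorem exists_eq_smul_of_isIrreducible [IsAlgClosed K] [FiniteDimensional K V]
    [IsIrreducible K L V] (φ : V →ₗ⁅K,L⁆ V) : ∃ c : K, ∀ v, φ v = c • v := by
  have := nontrivial_of_isIrreducible K L V
  obtain ⟨c, hc⟩ := Module.End.exists_eigenvalue (φ : Module.End K V)
  obtain ⟨v₀, hv₀⟩ := hc.exists_hasEigenvector
  have hker : (φ - c • LieModuleHom.id).ker = ⊤ := by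
    refine (IsSimpleOrder.eq_bot_or_eq_top _).resolve_left fun h => hv₀.2 ?_
    rw [← LieSubmodule.mem_bot (R := K) (L := L), ← h, LieModuleHom.mem_ker]
    simpa [sub_eq_zero] using hv₀.apply_eq_smul
  refine ⟨c, fun v => ?_⟩
  have hv : v ∈ (φ - c • LieModuleHom.id).ker := hker ▸ LieSubmodule.mem_top v
  rwa [LieModuleHom.mem_ker, LieModuleHom.sub_apply, LieModuleHom.smul_apply,
    LieModuleHom.id_apply, sub_eq_zero] at hv

theorem exists_eq_smul_of_commute_toEnd [IsAlgClosed K] [FiniteDimensional K V]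
    [IsIrreducible K L V] (T : Module.End K V) (hT : ∀ x, Commute (toEnd K L V x) T) :
    ∃ c : K, ∀ v, T v = c • v :=
  exists_eq_smul_of_isIrreducible
    { T with map_lie' := fun {x m} => (LinearMap.congr_fun (hT x) m).symm }

variable {ι : Type*} [Fintype ι]

variable (K V) in
def casimir (e f : ι → L) : Module.End K V :=
  ∑ i, toEnd K L V (e i) * toEnd K L V (f i)

theorem casimir_apply (e f : ι → L) (v : V) : casimir K V e f v = ∑ i, ⁅e i, ⁅f i, v⁆⁆ := by
  simp [casimir]

theorem commute_toEnd_casimir [DecidableEq ι] {B : LinearMap.BilinForm K L}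
    {e : Module.Basis ι K L} {f : ι → L} (hBinv : B.lieInvariant L) (hB : B.SeparatingRight)
    (hf : ∀ i j, B (e i) (f j) = if i = j then 1 else 0) (x : L) :
    Commute (toEnd K L V x) (casimir K V e f) := by
  let Φ : L →ₗ[K] L →ₗ[K] Module.End K V :=
    (LinearMap.mul K (Module.End K V)).compl₁₂ (toEnd K L V) (toEnd K L V)
  rw [commute_iff_eq, ← sub_eq_zero, ← B.sum_lie_apply_add_apply_lie_eq_zero hBinv hB hf Φ x,
    casimir, Finset.mul_sum, Finset.sum_mul, ← Finset.sum_sub_distrib]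
  refine Finset.sum_congr rfl fun i _ => ?_
  simp only [Φ, LinearMap.compl₁₂_apply, LinearMap.mul_apply', LieHom.coe_toLinearMap,
    LieHom.map_lie, Ring.lie_def]
  noncomm_ring

end LieModule

theorem casimir_acts_by_scalar_on_irreducible_general
    {K : Type*} [Field K] [IsAlgClosed K] {L : Type*} [LieRing L] [LieAlgebra K L]
    {V : Type*} [AddCommGroup V] [Module K V] [LieRingModule L V] [LieModule K L V]
    [Module.Finite K V] [Nontrivial V]
    (hirr : ∀ N : LieSubmodule K L V, N = ⊥ ∨ N = ⊤)
    (B : LinearMap.BilinForm K L)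
    (hBinv : ∀ x y z : L, B ⁅x, y⁆ z = B x ⁅y, z⁆)
    (hBnd : B.Nondegenerate)
    {n : ℕ} (e : Module.Basis (Fin n) K L) (f : Fin n → L)
    (hf : ∀ i j, B (e i) (f j) = if i = j then 1 else 0) :
    ∃ c : K, ∀ v : V, ∑ i, ⁅e i, ⁅f i, v⁆⁆ = c • v := by
  have : LieModule.IsIrreducible K L V := .mk fun N hN => (hirr N).resolve_left hN
  have hBlie : B.lieInvariant L := fun x y z => by
    rw [← lie_skew, map_neg, LinearMap.neg_apply, hBinv]
  obtain ⟨c, hc⟩ := LieModule.exists_eq_smul_of_commute_toEnd (LieModule.casimir K V e f)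
    (LieModule.commute_toEnd_casimir hBlie hBnd.2 hf)
  exact ⟨c, fun v => by rw [← LieModule.casimir_apply (K := K), hc]⟩

/-- Over an algebraically closed field, the Casimir operator acts by a scalar on any
nonzero finite-dimensional irreducible Lie module. -/
theorem casimir_acts_by_scalar_on_irreducible
    {K : Type*} [Field K] [IsAlgClosed K] {L : Type*} [LieRing L] [LieAlgebra K L]
    [Module.Finite K L]
    {V : Type*} [AddCommGroup V] [Module K V] [LieRingModule L V] [LieModule K L V]
    [Module.Finite K V] [Nontrivial V]
    (hirr : ∀ N : LieSubmodule K L V, N = ⊥ ∨ N = ⊤)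
    (B : LinearMap.BilinForm K L)
    (hBsymm : ∀ x y : L, B x y = B y x)
    (hBinv : ∀ x y z : L, B ⁅x, y⁆ z = B x ⁅y, z⁆)
    (hBnd : B.Nondegenerate)
    {n : ℕ} (e : Module.Basis (Fin n) K L) (f : Fin n → L)
    (hf : ∀ i j, B (e i) (f j) = if i = j then 1 else 0) :
    ∃ c : K, ∀ v : V, ∑ i, ⁅e i, ⁅f i, v⁆⁆ = c • v :=
  casimir_acts_by_scalar_on_irreducible_general hirr B hBinv hBnd e f hf
end

section
/- If the Killing form κ of L is nondegenerate, then for every i ∈ ℤ the filtration component 𝔤^i := ∑_{j ≥ i} 𝔤ⱼ is exactly the annihilator of 𝔤^{-i+1} with respect to κ: {x ∈ L : κ(x,y) = 0 for all y ∈ 𝔤^{-i+1}} = 𝔤^i. -/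
/-!
The Killing form pairs `𝔤 a` with `𝔤 b` trivially unless `a + b = 0`, since `ad x ∘ ad y` shifts
degrees by `a + b` and so has zero trace. Hence `𝔤^i` and `𝔤^{-i+1}` are orthogonal. Conversely,
split `x = p + q` with `p ∈ 𝔤^i` and `q` of degrees `< i`: if `x` annihilates `𝔤^{-i+1}`, then `q`
annihilates every `𝔤 b` (for `b > -i` because `x` and `p` do, for `b ≤ -i` by degree), so `q = 0`
by nondegeneracy.
-/

lemma killingForm_eq_zero_of_mem_of_add_ne_zero {K L ι : Type*} [Field K] [LieRing L]
    [LieAlgebra K L] [Module.Finite K L] [AddCancelCommMonoid ι] [DecidableEq ι]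
    {𝔤 : ι → Submodule K L}
    (hdecomp : DirectSum.IsInternal 𝔤)
    (hgr : ∀ i j : ι, ∀ x ∈ 𝔤 i, ∀ y ∈ 𝔤 j, ⁅x, y⁆ ∈ 𝔤 (i + j))
    {a b : ι} (hab : a + b ≠ 0) {x y : L} (hx : x ∈ 𝔤 a) (hy : y ∈ 𝔤 b) :
    killingForm K L x y = 0 := by
  rw [killingForm_apply_apply]
  refine LinearMap.trace_eq_zero_of_mapsTo_ne hdecomp (fun c ↦ a + (b + c)) (fun c ↦ ?_)
    fun c z hz ↦ hgr a (b + c) x hx _ (hgr b c y hy z hz)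
  simpa only [← add_assoc] using add_ne_right.mpr hab

namespace LinearMap.BilinForm

variable {R M : Type*} [CommSemiring R] [AddCommMonoid M] [Module R M]
  {B : LinearMap.BilinForm R M}

lemma apply_eq_zero_of_mem_biSup_left {ι : Type*} {𝔤 : ι → Submodule R M} {S : Set ι} {x y : M}
    (h : ∀ a ∈ S, ∀ x ∈ 𝔤 a, B x y = 0) (hx : x ∈ ⨆ a ∈ S, 𝔤 a) : B x y = 0 :=
  (iSup₂_le fun a ha x hx ↦ h a ha x hx : (⨆ a ∈ S, 𝔤 a) ≤ LinearMap.ker (B.flip y)) hx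

lemma apply_eq_zero_of_mem_biSup_right {ι : Type*} {𝔤 : ι → Submodule R M} {T : Set ι} {x y : M}
    (h : ∀ b ∈ T, ∀ y ∈ 𝔤 b, B x y = 0) (hy : y ∈ ⨆ b ∈ T, 𝔤 b) : B x y = 0 :=
  (iSup₂_le fun b hb y hy ↦ h b hb y hy : (⨆ b ∈ T, 𝔤 b) ≤ LinearMap.ker (B x)) hy

lemma eq_zero_of_forall_mem_apply_eq_zero {ι : Type*} {𝔤 : ι → Submodule R M}
    (hB : B.SeparatingLeft) (h𝔤 : ⨆ l, 𝔤 l = ⊤) {x : M}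
    (h : ∀ b, ∀ y ∈ 𝔤 b, B x y = 0) : x = 0 :=
  hB x fun _ ↦ (h𝔤 ▸ iSup_le fun b y hy ↦ h b y hy : ⊤ ≤ LinearMap.ker (B x)) trivial

theorem forall_mem_iSup_ge_apply_eq_zero_iff (hB : B.SeparatingLeft) {𝔤 : ℤ → Submodule R M}
    (h𝔤 : ⨆ l, 𝔤 l = ⊤) (horth : ∀ a b, a + b ≠ 0 → ∀ x ∈ 𝔤 a, ∀ y ∈ 𝔤 b, B x y = 0)
    (i : ℤ) (x : M) :
    (∀ y ∈ ⨆ l ≥ -i + 1, 𝔤 l, B x y = 0) ↔ x ∈ ⨆ l ≥ i, 𝔤 l := by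
  refine ⟨fun hx ↦ ?_, fun hx y hy ↦ ?_⟩
  · have hsplit : x ∈ (⨆ l ≥ i, 𝔤 l) ⊔ ⨆ l < i, 𝔤 l := by
      simp only [ge_iff_le, ← not_le, ← iSup_split, h𝔤, Submodule.mem_top]
    obtain ⟨p, hp, q, hq, rfl⟩ := Submodule.mem_sup.mp hsplit
    suffices q = 0 by rwa [this, add_zero]
    refine eq_zero_of_forall_mem_apply_eq_zero hB h𝔤 fun b y hy ↦ ?_
    rcases le_or_gt (-i + 1) b with hb | hb
    · have hpy : B p y = 0 :=
        apply_eq_zero_of_mem_biSup_left (S := {l | i ≤ l})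
          (fun a (ha : i ≤ a) p hp ↦ horth a b (by omega) p hp y hy) hp
      have hy' : y ∈ ⨆ l ≥ -i + 1, 𝔤 l := le_biSup 𝔤 (show b ∈ {l | -i + 1 ≤ l} from hb) hy
      simpa only [map_add, LinearMap.add_apply, hpy, zero_add] using hx y hy'
    · exact apply_eq_zero_of_mem_biSup_left (S := {l | l < i})
        (fun a (ha : a < i) q hq ↦ horth a b (by omega) q hq y hy) hq
  · refine apply_eq_zero_of_mem_biSup_right (T := {l | -i + 1 ≤ l})
      (fun b (hb : -i + 1 ≤ b) y hy ↦ ?_) hy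
    exact apply_eq_zero_of_mem_biSup_left (S := {l | i ≤ l})
      (fun a (ha : i ≤ a) x hx ↦ horth a b (by omega) x hx y hy) hx

end LinearMap.BilinForm

theorem filtration_component_eq_killing_annihilator_general
    {K : Type*} [Field K] {L : Type*} [LieRing L] [LieAlgebra K L]
    [Module.Finite K L]
    (𝔤 : ℤ → Submodule K L) (hdecomp : DirectSum.IsInternal 𝔤)
    (hgr : ∀ i j : ℤ, ∀ x ∈ 𝔤 i, ∀ y ∈ 𝔤 j, ⁅x, y⁆ ∈ 𝔤 (i + j))
    (hnd : (killingForm K L).Nondegenerate)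
    (i : ℤ) (x : L) :
    (∀ y ∈ (⨆ l ≥ -i + 1, 𝔤 l), killingForm K L x y = 0) ↔
      x ∈ (⨆ l ≥ i, 𝔤 l) :=
  LinearMap.BilinForm.forall_mem_iSup_ge_apply_eq_zero_iff hnd.1 hdecomp.submodule_iSup_eq_top
    (fun _ _ hab _ hx _ hy ↦ killingForm_eq_zero_of_mem_of_add_ne_zero hdecomp hgr hab hx hy) i x

/-- If the Killing form `κ` of a ℤ-graded finite-dimensional Lie algebra is nondegenerate,
then the filtration component `𝔤^i := ∑_{j ≥ i} 𝔤ⱼ` is exactly the annihilator of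
`𝔤^{-i+1}` with respect to `κ`. -/
theorem filtration_component_eq_killing_annihilator
    {K : Type*} [Field K] [CharZero K] {L : Type*} [LieRing L] [LieAlgebra K L]
    [Module.Finite K L]
    (𝔤 : ℤ → Submodule K L) (hdecomp : DirectSum.IsInternal 𝔤)
    (hgr : ∀ i j : ℤ, ∀ x ∈ 𝔤 i, ∀ y ∈ 𝔤 j, ⁅x, y⁆ ∈ 𝔤 (i + j))
    (hnd : (killingForm K L).Nondegenerate)
    (i : ℤ) (x : L) :
    (∀ y ∈ (⨆ l ≥ -i + 1, 𝔤 l), killingForm K L x y = 0) ↔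
      x ∈ (⨆ l ≥ i, 𝔤 l) :=
  filtration_component_eq_killing_annihilator_general 𝔤 hdecomp hgr hnd i x
end
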